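/- For real parameters σ and τ with 0 ≤ σ and 0 ≤ τ, the conditions (σ² < 2 and τ < 1 − √(σ² − σ⁴/4)) and (τ < 1 and σ < √(2−τ) − √τ) are equivalent. -/
import Mathlib


theorem stmt_0 (σ τ : ℝ) (hσ : 0 ≤ σ) (hτ : 0 ≤ τ) :
    (σ ^ 2 < 2 ∧ τ < 1 - Real.sqrt (σ ^ 2 - σ ^ 4 / 4)) ↔
      (τ < 1 ∧ σ < Real.sqrt (2 - τ) - Real.sqrt τ) := by
  have hst : Real.sqrt τ ^ 2 = τ := Real.sq_sqrt hτ
  have hstn : 0 ≤ Real.sqrt τ := Real.sqrt_nonneg τ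
  constructor
  · rintro ⟨h2, hlt⟩
    have hsn : 0 ≤ Real.sqrt (σ ^ 2 - σ ^ 4 / 4) := Real.sqrt_nonneg _
    have h1 : τ < 1 := by linarith
    have hpos : 0 < 1 - τ := by linarith
    have key : σ ^ 2 - σ ^ 4 / 4 < (1 - τ) ^ 2 :=
      (Real.sqrt_lt' hpos).mp (by linarith)
    -- 1 - τ > σ²/2
    have h3 : σ ^ 2 / 2 < 1 - τ := by
      nlinarith [sq_nonneg σ, sq_nonneg (σ^2)]
    -- 2σ√τ < 2 - 2τ - σ²
    have h4 : 2 * σ * Real.sqrt τ < 2 - 2 * τ - σ ^ 2 := by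
      have hb : (0:ℝ) ≤ 2 - 2 * τ - σ ^ 2 := by linarith
      have hsq : (2 * σ * Real.sqrt τ) ^ 2 < (2 - 2 * τ - σ ^ 2) ^ 2 := by
        nlinarith [sq_nonneg (2 * σ * Real.sqrt τ)]
      exact lt_of_pow_lt_pow_left₀ 2 hb hsq
    have h5 : σ + Real.sqrt τ < Real.sqrt (2 - τ) := by
      rw [show σ + Real.sqrt τ = |σ + Real.sqrt τ| from
        (abs_of_nonneg (by positivity)).symm] at *
      refine (Real.lt_sqrt (by positivity)).mpr ?_
      rw [abs_of_nonneg (by positivity)]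
      nlinarith
    exact ⟨h1, by linarith⟩
  · rintro ⟨h1, hlt⟩
    have h5 : σ + Real.sqrt τ < Real.sqrt (2 - τ) := by linarith
    have h6 : (σ + Real.sqrt τ) ^ 2 < 2 - τ :=
      (Real.lt_sqrt (by positivity)).mp h5
    have h7 : σ ^ 2 + 2 * σ * Real.sqrt τ + τ < 2 - τ := by nlinarith
    have h2 : σ ^ 2 < 2 := by nlinarith [mul_nonneg (mul_nonneg (by norm_num : (0:ℝ) ≤ 2) hσ) hstn]
    refine ⟨h2, ?_⟩
    have hpos : 0 < 1 - τ := by linarith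
    have hstpos : 0 ≤ 2 * σ * Real.sqrt τ := by positivity
    have h8 : (2 * σ * Real.sqrt τ) ^ 2 < (2 - 2 * τ - σ ^ 2) ^ 2 := by
      have : 2 * σ * Real.sqrt τ < 2 - 2 * τ - σ ^ 2 := by linarith
      nlinarith
    have key : σ ^ 2 - σ ^ 4 / 4 < (1 - τ) ^ 2 := by nlinarith
    have := (Real.sqrt_lt' hpos).mpr key
    linarith
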